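/- Let E be a stationary and co-stationary subset of ω₁ with the subspace topology. Then E is ω₁-compact (every closed discrete subspace of E is countable), but E is not σ-countably compact (E is not the union of countably many countably compact subspaces). -/

import Mathlib

open Set Topology Filter

/-- `C` is a closed unbounded (club) subset of the ordinal `δ`. -/
def IsClubIn (C : Set Ordinal) (δ : Ordinal) : Prop :=
  C ⊆ Set.Iio δ ∧
  (∀ a < δ, ∃ b ∈ C, a ≤ b ∧ b < δ) ∧
  (∀ a < δ, a ≠ 0 → (∀ b < a, ∃ c ∈ C, b < c ∧ c < a) → a ∈ C)

/-- A space is ω₁-compact (has countable extent) if every closed discrete subspace is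
countable. -/
def OmegaOneCompact (X : Type*) [TopologicalSpace X] : Prop :=
  ∀ D : Set X, IsClosed D → DiscreteTopology D → D.Countable

/-- A subset `K` is countably compact if every countably infinite subset of `K` has an
accumulation point in `K`. -/
def CountablyCompactSet {X : Type*} [TopologicalSpace X] (K : Set X) : Prop :=
  ∀ Z ⊆ K, Z.Countable → Z.Infinite → ∃ x ∈ K, AccPt x (𝓟 Z)

/-- A space is σ-countably compact if it is the union of countably many countably
compact subspaces. -/
def SigmaCountablyCompact (X : Type*) [TopologicalSpace X] : Prop :=
  ∃ C : ℕ → Set X, (∀ n, CountablyCompactSet (C n)) ∧ (⋃ n, C n) = Set.univ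

/-!
An uncountable `A ⊆ ω₁` is unbounded, so its accumulation points below `ω₁` form a club.
If `D ⊆ E` were uncountable, closed and discrete, the stationary set `E` would meet this club
at an accumulation point of `D`, which then lies in `D`, against discreteness.
A countably compact `K ⊆ ω₁` contains each of its accumulation points `x < ω₁`: otherwise the
countable directed open cover `{Iio b ∪ Ioi x | b < x}` of `K` would have a member covering
`K`. So if `K ⊆ E` were countably compact and uncountable, the club of its accumulation points
would lie in `E`, against co-stationarity. A stationary set is uncountable, hence not a
countable union of countable sets.
-/

open Ordinal Cardinal

universe u

def IsStationaryIn (E : Set Ordinal) (δ : Ordinal) : Prop :=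
  ∀ C : Set Ordinal, IsClubIn C δ → (E ∩ C).Nonempty

theorem accPt_val_image_iff {X : Type*} [TopologicalSpace X] {S : Set X} {D : Set S} {e : S} :
    AccPt (e : X) (𝓟 (Subtype.val '' D)) ↔ AccPt e (𝓟 D) := by
  simp only [accPt_iff_frequently, nhds_subtype, Filter.frequently_comap]
  refine Filter.frequently_congr (Eventually.of_forall fun x => ?_)
  constructor
  · rintro ⟨hx, y, hyD, rfl⟩
    exact ⟨y, rfl, fun h => hx (h ▸ rfl), hyD⟩
  · rintro ⟨y, rfl, hy, hyD⟩
    exact ⟨fun h => hy (Subtype.ext h), y, hyD, rfl⟩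

theorem CountablyCompactSet.isCountablyCompact {X : Type*} [TopologicalSpace X] [T1Space X]
    {K : Set X} (hK : CountablyCompactSet K) : IsCountablyCompact K := by
  refine isCountablyCompact_iff_infinite_subset_has_accPt.mpr fun B hBK hB => ?_
  obtain ⟨Z, hZB, hZc, hZi⟩ := hB.exists_subset_countable_infinite
  obtain ⟨x, hxK, hx⟩ := hK Z (hZB.trans hBK) hZc hZi
  exact ⟨x, hxK, hx.mono (principal_mono.mpr hZB)⟩

theorem StrictMono.accPt_iSup {α : Type*} [ConditionallyCompleteLinearOrder α]
    [TopologicalSpace α] [OrderTopology α] [SuccOrder α] [NoMaxOrder α] {f : ℕ → α}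
    (hf : StrictMono f) (hbdd : BddAbove (range f)) : AccPt (⨆ n, f n) (𝓟 (range f)) := by
  refine SuccOrder.accPt_principal.mpr ⟨not_isMin_of_lt ((hf (Nat.lt_succ_self 0)).trans_le
    (le_ciSup hbdd 1)), fun b hb => ?_⟩
  obtain ⟨n, hn⟩ := (lt_ciSup_iff hbdd).mp hb
  exact ⟨f (n + 1), mem_range_self _, hn.trans (hf (Nat.lt_succ_self n)),
    (hf (Nat.lt_succ_self (n + 1))).trans_le (le_ciSup hbdd _)⟩

theorem countable_Iio_of_lt_omega_one {x : Ordinal.{u}} (hx : x < ω₁) : (Iio x).Countable := by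
  rw [← le_aleph0_iff_set_countable, Cardinal.mk_Iio_ordinal, ← lift_aleph0.{u + 1, u},
    Cardinal.lift_le, ← lt_aleph_one_iff]
  exact lt_omega_iff_card_lt.mp hx

theorem exists_mem_gt_of_not_countable {A : Set Ordinal} (h : ¬A.Countable)
    {a : Ordinal} (ha : a < ω₁) : ∃ c ∈ A, a < c := by
  by_contra! hle
  refine h ((countable_Iio_of_lt_omega_one ((isSuccLimit_omega 1).succ_lt ha)).mono ?_)
  rw [Order.Iio_succ]
  exact hle

theorem isClubIn_Iio_inter_derivedSet {A : Set Ordinal} {δ : Ordinal} (hδ : ℵ₀ < δ.cof)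
    (hA : ∀ a < δ, ∃ c ∈ A, a < c ∧ c < δ) : IsClubIn (Iio δ ∩ derivedSet A) δ := by
  refine ⟨inter_subset_left, fun a ha => ?_, fun a ha ha0 hcof => ⟨ha, ?_⟩⟩
  · choose! g hgA hgt hgδ using hA
    set F : ℕ → Ordinal := fun n => g^[n] a
    have hFsucc : ∀ n, F (n + 1) = g (F n) := fun n => Function.iterate_succ_apply' g n a
    have hFδ : ∀ n, F n < δ := fun n => by
      induction n with
      | zero => exact ha
      | succ n ih => exact hFsucc n ▸ hgδ _ ih
    have hF : StrictMono F := strictMono_nat_of_lt_succ fun n => hFsucc n ▸ hgt _ (hFδ n)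
    have hsup : ⨆ n, F (n + 1) < δ := lift_iSup_lt_of_lt_cof (by simpa using hδ) fun n => hFδ _
    refine ⟨⨆ n, F (n + 1), ⟨hsup, ?_⟩, ?_, hsup⟩
    · refine ((hF.comp (strictMono_nat_of_lt_succ fun n => Nat.lt_succ_self (n + 1))).accPt_iSup
        (Ordinal.bddAbove_of_small)).mono (principal_mono.mpr ?_)
      rintro _ ⟨n, rfl⟩
      exact (hFsucc n ▸ hgA _ (hFδ n) : F (n + 1) ∈ A)
    · exact (hF.monotone (Nat.zero_le 1)).trans (Ordinal.le_iSup (fun n => F (n + 1)) 0)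
  · have hacc : AccPt a (𝓟 (Iio δ ∩ derivedSet A)) :=
      SuccOrder.accPt_principal.mpr ⟨not_isMin_iff_ne_bot.mpr ha0, fun b hb => by
        obtain ⟨c, hc, hbc, hca⟩ := hcof b hb
        exact ⟨c, hc, hbc, hca⟩⟩
    exact isClosed_iff_accPt.mp (isClosed_derivedSet A) a
      (hacc.mono (principal_mono.mpr inter_subset_right))

theorem IsStationaryIn.exists_accPt {E A : Set Ordinal} (hE : IsStationaryIn E ω₁)
    (hA : A ⊆ Iio ω₁) (hAc : ¬A.Countable) : ∃ e ∈ E, AccPt e (𝓟 A) := by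
  obtain ⟨e, heE, -, he⟩ := hE _ (isClubIn_Iio_inter_derivedSet (by simp) fun a ha =>
    let ⟨c, hcA, hac⟩ := exists_mem_gt_of_not_countable hAc ha
    ⟨c, hcA, hac, hA hcA⟩)
  exact ⟨e, heE, he⟩

theorem IsStationaryIn.not_countable {E : Set Ordinal} (hE : IsStationaryIn E ω₁) :
    ¬E.Countable := by
  intro hc
  have : Countable ↥(E ∩ Iio ω₁) := (hc.mono inter_subset_left).to_subtype
  set b := ⨆ e : ↥(E ∩ Iio ω₁), (e : Ordinal)
  have hb : b < ω₁ := iSup_lt_omega_one fun e => e.2.2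
  have hunb : ∀ a < ω₁, ∃ c ∈ Ioo b ω₁, a < c ∧ c < ω₁ := fun a ha =>
    have hsucc : Order.succ (max a b) < ω₁ := (isSuccLimit_omega 1).succ_lt (max_lt ha hb)
    ⟨_, ⟨(le_max_right a b).trans_lt (Order.lt_succ _), hsucc⟩,
      (le_max_left a b).trans_lt (Order.lt_succ _), hsucc⟩
  obtain ⟨e, heE, he, hacc⟩ := hE _ (isClubIn_Iio_inter_derivedSet (by simp) hunb)
  have heb : e ≤ b := Ordinal.le_iSup (fun e : ↥(E ∩ Iio ω₁) => (e : Ordinal)) ⟨e, heE, he⟩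
  obtain ⟨c, ⟨hbc, -⟩, -, hce⟩ := (SuccOrder.accPt_principal.mp hacc).2 0
    (pos_iff_ne_zero.mpr (not_isMin_iff_ne_bot.mp (SuccOrder.accPt_principal.mp hacc).1))
  exact (hbc.trans hce).not_ge heb

theorem omegaOneCompact_of_isStationaryIn {E : Set Ordinal} (hE : E ⊆ Iio ω₁)
    (hstat : IsStationaryIn E ω₁) : OmegaOneCompact E := by
  intro D hDc hDd
  by_contra hD
  obtain ⟨e, heE, hacc⟩ := hstat.exists_accPt (A := Subtype.val '' D)
    (image_subset_iff.mpr fun x _ => hE x.2)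
    (fun h => hD ((h.preimage Subtype.val_injective).mono (subset_preimage_image _ _)))
  have hdisj :=
    isClosed_and_discrete_iff.mp ⟨hDc, isDiscrete_iff_discreteTopology.mpr hDd⟩ ⟨e, heE⟩
  exact (accPt_val_image_iff.mp hacc).ne (disjoint_iff.mp hdisj)

theorem IsCountablyCompact.mem_of_accPt_of_lt_omega_one {S : Set Ordinal}
    (hS : IsCountablyCompact S) {x : Ordinal} (hx : x < ω₁) (hacc : AccPt x (𝓟 S)) : x ∈ S := by
  by_contra hxS
  have hlim := hacc.isSuccLimit
  have : Countable (Iio x) := (countable_Iio_of_lt_omega_one hx).to_subtype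
  have : Nonempty (Iio x) := ⟨⟨0, hlim.bot_lt⟩⟩
  have hcover : S ⊆ ⋃ b : Iio x, Iio (b : Ordinal) ∪ Ioi x := fun s hsS => by
    rcases lt_trichotomy s x with hsx | rfl | hxs
    · exact mem_iUnion.mpr ⟨⟨_, hlim.succ_lt hsx⟩, Or.inl (Order.lt_succ s)⟩
    · exact absurd hsS hxS
    · exact mem_iUnion.mpr ⟨Classical.arbitrary _, Or.inr hxs⟩
  obtain ⟨b, hb⟩ := hS.elim_directed_cover _ (fun _ => isOpen_Iio.union isOpen_Ioi) hcover
    (Monotone.directed_le fun b c hbc => union_subset_union_left _ (Iio_subset_Iio hbc))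
  obtain ⟨s, hsS, hbs, hsx⟩ := (SuccOrder.accPt_principal.mp hacc).2 b b.2
  rcases hb hsS with hsb | hxs
  exacts [hbs.not_gt hsb, hsx.not_gt hxs]

theorem CountablyCompactSet.countable_of_isStationaryIn_compl {E : Set Ordinal}
    (hE : E ⊆ Iio ω₁) (hcostat : IsStationaryIn (Iio ω₁ \ E) ω₁) {K : Set E}
    (hK : CountablyCompactSet K) : K.Countable := by
  by_contra hK'
  have hc : ¬(Subtype.val '' K).Countable := fun h =>
    hK' ((h.preimage Subtype.val_injective).mono (subset_preimage_image _ _))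
  obtain ⟨x, ⟨hx, hxE⟩, hacc⟩ :=
    hcostat.exists_accPt (A := Subtype.val '' K) (image_subset_iff.mpr fun y _ => hE y.2) hc
  obtain ⟨y, -, rfl⟩ := (IsEmbedding.subtypeVal.isCountablyCompact_iff.mp hK.isCountablyCompact)
    |>.mem_of_accPt_of_lt_omega_one hx hacc
  exact hxE y.2

theorem not_sigmaCountablyCompact_of_isStationaryIn_compl {E : Set Ordinal}
    (hE : E ⊆ Iio ω₁) (hunc : ¬E.Countable) (hcostat : IsStationaryIn (Iio ω₁ \ E) ω₁) :
    ¬SigmaCountablyCompact E := by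
  rintro ⟨C, hC, hcover⟩
  have : (univ : Set E).Countable :=
    hcover ▸ countable_iUnion fun n => (hC n).countable_of_isStationaryIn_compl hE hcostat
  exact hunc (countable_coe_iff.mp (countable_univ_iff.mp this))

/-- A stationary, co-stationary subset of ω₁ with the subspace topology is ω₁-compact
but not σ-countably compact. -/
theorem stationary_costationary_omega1Compact_not_sigmaCC (E : Set Ordinal)
    (hE : E ⊆ Set.Iio (Cardinal.aleph 1).ord)
    (hstat : ∀ C : Set Ordinal, IsClubIn C (Cardinal.aleph 1).ord → (E ∩ C).Nonempty)
    (hcostat : ∀ C : Set Ordinal, IsClubIn C (Cardinal.aleph 1).ord →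
      ((Set.Iio (Cardinal.aleph 1).ord \ E) ∩ C).Nonempty) :
    OmegaOneCompact ↥E ∧ ¬ SigmaCountablyCompact ↥E := by
  rw [Cardinal.ord_aleph] at hE hstat hcostat
  exact ⟨omegaOneCompact_of_isStationaryIn hE hstat,
    not_sigmaCountablyCompact_of_isStationaryIn_compl hE (IsStationaryIn.not_countable hstat)
      hcostat⟩
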